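/- In the mixed-measure setting, let f_d : D• → ℝ be a function with f_d > 0, and define the discrete embedding ι_d(f_d) : I → ℝ by ι_d(f_d)(t) = f_d(t_{D+1}) for t ∈ C and ι_d(f_d)(t_d) = f_d(t_d) for each t_d ∈ D. Set S_{δ•}(f_d) = (1/Σ_{d=1}^{D+1} w_d) Σ_{d=1}^{D+1} w_d log f_d(t_d), where w_{D+1} = λ(I). Then (1/μ(I)) ∫_I log ι_d(f_d) dμ = S_{δ•}(f_d), and consequently clr_μ[ι_d(f_d)](t) = log f_d(t_{D+1}) − S_{δ•}(f_d) for t ∈ C and clr_μ[ι_d(f_d)](t_d) = log f_d(t_d) − S_{δ•}(f_d) for each t_d ∈ D; that is, the clr transform commutes with the discrete embedding. -/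

import Mathlib

/-!
All atoms lie in `I`, so `μ` restricted to `I` is `μ` itself and `μ(I) = Σ w_d + λ(I)`.
The integral splits into the atomic part `Σ w_d log f_d(t_d)` and a Lebesgue part; the atoms form
a Lebesgue-null set, so on it `log ι_d(f_d)` is a.e. the constant `log f_d(t_{D+1})`, contributing
`λ(I) log f_d(t_{D+1})`. Dividing by `μ(I)` gives `S_{δ•}`, and the clr values follow pointwise.
-/

open MeasureTheory
open scoped Classical

/-- The mixed reference measure `μ = Σ_d w_d δ_{t_d} + λ`, where `λ` is Lebesgue measure
restricted to `I`. -/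
noncomputable def mixedMeasure (I : Set ℝ) (n : ℕ) (t : Fin n → ℝ) (w : Fin n → ℝ) :
    Measure ℝ :=
  (∑ d, ENNReal.ofReal (w d) • Measure.dirac (t d)) + volume.restrict I

section MixedMeasure

variable {I : Set ℝ} {n : ℕ} {t : Fin n → ℝ} {w : Fin n → ℝ}

theorem mixedMeasure_restrict_self (hI : MeasurableSet I) (htI : ∀ d, t d ∈ I) :
    (mixedMeasure I n t w).restrict I = mixedMeasure I n t w := by
  refine Measure.restrict_eq_self_of_ae_mem (mem_ae_iff.mpr ?_)
  simp [mixedMeasure, Measure.restrict_apply hI.compl, hI.compl, htI]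

theorem mixedMeasure_apply_self_toReal (hI : MeasurableSet I) (htI : ∀ d, t d ∈ I)
    (hw : ∀ d, 0 ≤ w d) (hIfin : volume I ≠ ⊤) :
    (mixedMeasure I n t w I).toReal = ∑ d, w d + (volume I).toReal := by
  have hatoms :
      (∑ d, ENNReal.ofReal (w d) • Measure.dirac (t d)) I = ∑ d, ENNReal.ofReal (w d) := by
    simp [Measure.dirac_apply' _ hI, htI]
  rw [mixedMeasure, Measure.add_apply, Measure.restrict_apply_self, hatoms,
    ENNReal.toReal_add (by simp) hIfin, ENNReal.toReal_sum fun d _ => ENNReal.ofReal_ne_top]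
  simp only [ENNReal.toReal_ofReal (hw _)]

theorem integral_mixedMeasure (hw : ∀ d, 0 ≤ w d) {f : ℝ → ℝ} (hf : IntegrableOn f I) :
    ∫ x, f x ∂mixedMeasure I n t w = ∑ d, w d * f (t d) + ∫ x in I, f x := by
  have hatom : ∀ d, Integrable f (ENNReal.ofReal (w d) • Measure.dirac (t d)) := fun d =>
    (integrable_dirac (by simp)).smul_measure ENNReal.ofReal_ne_top
  rw [mixedMeasure, integral_add_measure (integrable_finsetSum_measure.2 fun d _ => hatom d) hf,
    integral_finsetSum_measure fun d _ => hatom d]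
  simp only [integral_smul_measure, integral_dirac, ENNReal.toReal_ofReal (hw _), smul_eq_mul]

theorem integral_mixedMeasure_of_eq_const_off_atoms (hw : ∀ d, 0 ≤ w d)
    (hIfin : volume I ≠ ⊤) {f : ℝ → ℝ} {c : ℝ} (hf : ∀ x ∉ Set.range t, f x = c) :
    ∫ x, f x ∂mixedMeasure I n t w = ∑ d, w d * f (t d) + (volume I).toReal * c := by
  have hae : f =ᵐ[volume.restrict I] fun _ => c := by
    refine ae_restrict_of_ae (measure_eq_zero_iff_ae_notMem.mp ?_ |>.mono hf)
    exact (Set.countable_range t).measure_zero _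
  rw [integral_mixedMeasure hw ((integrableOn_const hIfin).congr_fun_ae hae.symm),
    integral_congr_ae hae, setIntegral_const, smul_eq_mul, Measure.real]

end MixedMeasure

theorem clr_commutes_with_discrete_embedding_general
    (I : Set ℝ) (hImeas : MeasurableSet I)
    (hIfin : volume I < ⊤)
    (n : ℕ) (t : Fin n → ℝ) (htI : ∀ d, t d ∈ I)
    (w : Fin n → ℝ) (hw : ∀ d, 0 < w d)
    (s : ℝ)
    (fd : ℝ → ℝ)
    (Sd : ℝ)
    (hSd : Sd = (∑ d, w d + (volume I).toReal)⁻¹ *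
      (∑ d, w d * Real.log (fd (t d)) + (volume I).toReal * Real.log (fd s)))
    (g : ℝ → ℝ) (hg : g = fun x => if x ∈ Set.range t then fd x else fd s) :
    ((mixedMeasure I n t w) I).toReal⁻¹ *
        (∫ x in I, Real.log (g x) ∂(mixedMeasure I n t w)) = Sd ∧
      (∀ x ∈ I \ Set.range t,
        Real.log (g x) - ((mixedMeasure I n t w) I).toReal⁻¹ *
            (∫ y in I, Real.log (g y) ∂(mixedMeasure I n t w)) =
          Real.log (fd s) - Sd) ∧
      (∀ d : Fin n,
        Real.log (g (t d)) - ((mixedMeasure I n t w) I).toReal⁻¹ *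
            (∫ y in I, Real.log (g y) ∂(mixedMeasure I n t w)) =
          Real.log (fd (t d)) - Sd) := by
  have hw' : ∀ d, 0 ≤ w d := fun d => (hw d).le
  have hg_atom : ∀ d, g (t d) = fd (t d) := fun d => by rw [hg]; exact if_pos ⟨d, rfl⟩
  have hg_off : ∀ x ∉ Set.range t, g x = fd s := fun x hx => by rw [hg]; exact if_neg hx
  have hmean : ((mixedMeasure I n t w) I).toReal⁻¹ *
      (∫ x in I, Real.log (g x) ∂(mixedMeasure I n t w)) = Sd := by
    rw [mixedMeasure_restrict_self hImeas htI,
      integral_mixedMeasure_of_eq_const_off_atoms hw' hIfin.ne fun x hx => by rw [hg_off x hx],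
      mixedMeasure_apply_self_toReal hImeas htI hw' hIfin.ne, hSd]
    simp only [hg_atom]
  refine ⟨hmean, fun x hx => ?_, fun d => ?_⟩
  · rw [hg_off x hx.2, hmean]
  · rw [hg_atom d, hmean]

/-- In the mixed-measure setting, the clr transform commutes with the discrete embedding
`ι_d(f_d)` (equal to `f_d(t_{D+1})` on `C = I ∖ D` and to `f_d(t_d)` at each atom):
`(1/μ(I)) ∫_I log ι_d(f_d) dμ = S_{δ•}(f_d)`, hence
`clr_μ[ι_d(f_d)] = log f_d(t_{D+1}) − S_{δ•}(f_d)` on `C` and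
`clr_μ[ι_d(f_d)](t_d) = log f_d(t_d) − S_{δ•}(f_d)` on `D`. -/
theorem clr_commutes_with_discrete_embedding
    (I : Set ℝ) (hImeas : MeasurableSet I) (hIconn : I.OrdConnected)
    (hI0 : 0 < volume I) (hIfin : volume I < ⊤)
    (n : ℕ) (t : Fin n → ℝ) (htinj : Function.Injective t) (htI : ∀ d, t d ∈ I)
    (w : Fin n → ℝ) (hw : ∀ d, 0 < w d)
    (s : ℝ) (hs : s ∉ Set.range t)
    (fd : ℝ → ℝ) (hfdpos : ∀ d, 0 < fd (t d)) (hfdspos : 0 < fd s)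
    (Sd : ℝ)
    (hSd : Sd = (∑ d, w d + (volume I).toReal)⁻¹ *
      (∑ d, w d * Real.log (fd (t d)) + (volume I).toReal * Real.log (fd s)))
    (g : ℝ → ℝ) (hg : g = fun x => if x ∈ Set.range t then fd x else fd s) :
    ((mixedMeasure I n t w) I).toReal⁻¹ *
        (∫ x in I, Real.log (g x) ∂(mixedMeasure I n t w)) = Sd ∧
      (∀ x ∈ I \ Set.range t,
        Real.log (g x) - ((mixedMeasure I n t w) I).toReal⁻¹ *
            (∫ y in I, Real.log (g y) ∂(mixedMeasure I n t w)) =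
          Real.log (fd s) - Sd) ∧
      (∀ d : Fin n,
        Real.log (g (t d)) - ((mixedMeasure I n t w) I).toReal⁻¹ *
            (∫ y in I, Real.log (g y) ∂(mixedMeasure I n t w)) =
          Real.log (fd (t d)) - Sd) :=
  clr_commutes_with_discrete_embedding_general I hImeas hIfin n t htI w hw s fd Sd hSd g hg
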